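/- arXiv:2010.11637 — 5 statements merged into one kernel-verified Lean document; each statement's English description precedes it below -/
import Mathlib

section
/- Let k ≥ 1, z ∈ ℝ^n and ŵ_0,…,ŵ_{k−1} ∈ ℝ^n. The function (u_0,…,u_{k−1}) ↦ Σ_{i=0}^{k−1}(x_iᵀ Q x_i + u_iᵀ R u_i) + x_kᵀ P x_k, where x_0 = z and x_{i+1} = A x_i + B u_i + ŵ_i for 0 ≤ i ≤ k−1, has a unique global minimizer over (ℝ^m)^k, and the first component of this minimizer is u_0 = −(R + BᵀPB)⁻¹ Bᵀ (P A z + Σ_{i=0}^{k−1} (Fᵀ)^i P ŵ_i). -/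
open Matrix

noncomputable def evNorm {n : ℕ} (x : Fin n → ℝ) : ℝ := Real.sqrt (∑ i, x i ^ 2)

noncomputable def specNorm {n m : ℕ} (M : Matrix (Fin n) (Fin m) ℝ) : ℝ :=
  sSup {c : ℝ | ∃ x : Fin m → ℝ, evNorm x ≤ 1 ∧ c = evNorm (M *ᵥ x)}

noncomputable def lambdaMin {n : ℕ} (M : Matrix (Fin n) (Fin n) ℝ) : ℝ :=
  sInf {c : ℝ | ∃ x : Fin n → ℝ, evNorm x = 1 ∧ c = x ⬝ᵥ (M *ᵥ x)}

noncomputable def specRad {n : ℕ} (M : Matrix (Fin n) (Fin n) ℝ) : ENNReal :=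
  spectralRadius ℂ (M.map Complex.ofReal)

noncomputable def seqState {n m : ℕ} (A : Matrix (Fin n) (Fin n) ℝ)
    (B : Matrix (Fin n) (Fin m) ℝ) (x0 : Fin n → ℝ)
    (u : ℕ → Fin m → ℝ) (w : ℕ → Fin n → ℝ) : ℕ → Fin n → ℝ
  | 0 => x0
  | t + 1 => A *ᵥ seqState A B x0 u w t + B *ᵥ u t + w t

noncomputable def trajCost {n m : ℕ} (A : Matrix (Fin n) (Fin n) ℝ)
    (B : Matrix (Fin n) (Fin m) ℝ) (Q : Matrix (Fin n) (Fin n) ℝ)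
    (R : Matrix (Fin m) (Fin m) ℝ) (Qf : Matrix (Fin n) (Fin n) ℝ)
    (x0 : Fin n → ℝ) (w : ℕ → Fin n → ℝ) (T : ℕ) (u : ℕ → Fin m → ℝ) : ℝ :=
  (∑ t ∈ Finset.range T,
      (seqState A B x0 u w t ⬝ᵥ (Q *ᵥ seqState A B x0 u w t) + u t ⬝ᵥ (R *ᵥ u t)))
    + seqState A B x0 u w T ⬝ᵥ (Qf *ᵥ seqState A B x0 u w T)

noncomputable def mpcCost {n m : ℕ} (A : Matrix (Fin n) (Fin n) ℝ)
    (B : Matrix (Fin n) (Fin m) ℝ) (Q : Matrix (Fin n) (Fin n) ℝ)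
    (R : Matrix (Fin m) (Fin m) ℝ) (P : Matrix (Fin n) (Fin n) ℝ)
    (z : Fin n → ℝ) (what : ℕ → Fin n → ℝ) (k : ℕ) (u : Fin k → Fin m → ℝ) : ℝ :=
  trajCost A B Q R P z what k (fun t => if h : t < k then u ⟨t, h⟩ else 0)

/-!
Completing the square against the Riccati solution. With `S = R + BᵀPB`, `p = Pw + q` and
`κ = -S⁻¹Bᵀ(PAx + p)`, the Riccati equation turns one step of cost plus a quadratic cost-to-go
`yᵀPy + 2qᵀy` (at the next state `y = Ax + Bu + w`) into
`xᵀPx + 2(Fᵀp)ᵀx + const + (u - κ)ᵀS(u - κ)`.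
Iterating over the horizon, the cost equals a constant plus `∑ₜ (uₜ - κₜ(xₜ))ᵀS(uₜ - κₜ(xₜ))`,
where `κₜ` is the affine feedback whose offset is the costate `∑ᵢ (Fᵀ)ⁱ P ŵₜ₊ᵢ`. As `S ≻ 0`, the
minimizers are exactly the controls obeying this feedback law at every step; since the state at
time `t` depends only on earlier controls, there is exactly one such control sequence, and its
first entry is `κ₀(z)`.
-/

section QuadraticForms

variable {ι κ α : Type*} [Fintype ι] [Fintype κ] [CommRing α]

lemma mulVec_dotProduct (B : Matrix ι κ α) (a : κ → α) (y : ι → α) :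
    B *ᵥ a ⬝ᵥ y = a ⬝ᵥ Bᵀ *ᵥ y := by
  rw [dotProduct_comm, dotProduct_transpose_mulVec]

lemma dotProduct_mulVec_comm_of_isSymm {M : Matrix ι ι α} (hM : M.IsSymm) (a b : ι → α) :
    a ⬝ᵥ M *ᵥ b = b ⬝ᵥ M *ᵥ a := by
  rw [← dotProduct_transpose_mulVec, hM.eq]

lemma add_dotProduct_mulVec_add {M : Matrix ι ι α} (hM : M.IsSymm) (a b : ι → α) :
    (a + b) ⬝ᵥ M *ᵥ (a + b) = a ⬝ᵥ M *ᵥ a + 2 * (b ⬝ᵥ M *ᵥ a) + b ⬝ᵥ M *ᵥ b := by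
  rw [mulVec_add, add_dotProduct, dotProduct_add, dotProduct_add,
    dotProduct_mulVec_comm_of_isSymm hM a b]
  ring

lemma mulVec_dotProduct_mulVec_mulVec (B : Matrix ι κ α) (M : Matrix ι ι α) (a b : κ → α) :
    B *ᵥ a ⬝ᵥ M *ᵥ (B *ᵥ b) = a ⬝ᵥ (Bᵀ * M * B) *ᵥ b := by
  rw [mulVec_dotProduct, mulVec_mulVec, mulVec_mulVec]

lemma dotProduct_mulVec_add_two_mul_dotProduct [DecidableEq ι] {S : Matrix ι ι α}
    (hS : S.IsSymm) (hdet : IsUnit S.det) (u d : ι → α) :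
    u ⬝ᵥ S *ᵥ u + 2 * (u ⬝ᵥ d)
      = (u + S⁻¹ *ᵥ d) ⬝ᵥ S *ᵥ (u + S⁻¹ *ᵥ d) - d ⬝ᵥ S⁻¹ *ᵥ d := by
  have hSd : S *ᵥ (S⁻¹ *ᵥ d) = d := by
    rw [mulVec_mulVec, mul_nonsing_inv S hdet, one_mulVec]
  rw [add_dotProduct_mulVec_add hS, dotProduct_mulVec_comm_of_isSymm hS (S⁻¹ *ᵥ d), hSd,
    dotProduct_comm (S⁻¹ *ᵥ d)]
  ring

end QuadraticForms

section Riccati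

variable {ι κ α : Type*} [Fintype ι] [Fintype κ] [DecidableEq κ] [CommRing α]
  {A Q P F : Matrix ι ι α} {B : Matrix ι κ α} {R S : Matrix κ κ α}

lemma riccati_value_step (hP : P.IsSymm) (hSinv : S⁻¹.IsSymm)
    (hDARE : P = Q + Aᵀ * P * A - Aᵀ * P * B * S⁻¹ * (Bᵀ * P * A))
    (hF : F = A - B * (S⁻¹ * (Bᵀ * P * A))) (x w q : ι → α) :
    x ⬝ᵥ Q *ᵥ x + (A *ᵥ x + w) ⬝ᵥ P *ᵥ (A *ᵥ x + w) + 2 * (q ⬝ᵥ (A *ᵥ x + w))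
        - Bᵀ *ᵥ (P *ᵥ (A *ᵥ x + w) + q) ⬝ᵥ S⁻¹ *ᵥ (Bᵀ *ᵥ (P *ᵥ (A *ᵥ x + w) + q))
      = x ⬝ᵥ P *ᵥ x + 2 * (Fᵀ *ᵥ (P *ᵥ w + q) ⬝ᵥ x)
        + (w ⬝ᵥ P *ᵥ w + 2 * (q ⬝ᵥ w) - (P *ᵥ w + q) ⬝ᵥ (B * S⁻¹ * Bᵀ) *ᵥ (P *ᵥ w + q)) := by
  set G := Bᵀ * P * A
  set p := P *ᵥ w + q
  have hd : Bᵀ *ᵥ (P *ᵥ (A *ᵥ x + w) + q) = G *ᵥ x + Bᵀ *ᵥ p := by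
    simp only [G, p, mulVec_add, ← mulVec_mulVec]
    abel
  have hGt : Gᵀ = Aᵀ * P * B := by
    rw [transpose_mul, transpose_mul, transpose_transpose, hP.eq, Matrix.mul_assoc]
  have hgain : (G *ᵥ x + Bᵀ *ᵥ p) ⬝ᵥ S⁻¹ *ᵥ (G *ᵥ x + Bᵀ *ᵥ p)
      = x ⬝ᵥ (Aᵀ * P * B * S⁻¹ * G) *ᵥ x + 2 * (p ⬝ᵥ (B * S⁻¹ * G) *ᵥ x)
        + p ⬝ᵥ (B * S⁻¹ * Bᵀ) *ᵥ p := by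
    rw [add_dotProduct_mulVec_add hSinv, mulVec_dotProduct_mulVec_mulVec,
      mulVec_dotProduct_mulVec_mulVec, mulVec_dotProduct, transpose_transpose, hGt,
      mulVec_mulVec, mulVec_mulVec]
  have hstate : (A *ᵥ x + w) ⬝ᵥ P *ᵥ (A *ᵥ x + w)
      = x ⬝ᵥ (Aᵀ * P * A) *ᵥ x + 2 * (w ⬝ᵥ P *ᵥ A *ᵥ x) + w ⬝ᵥ P *ᵥ w := by
    rw [add_dotProduct_mulVec_add hP, mulVec_dotProduct_mulVec_mulVec]
  have hclosed :
      Fᵀ *ᵥ p ⬝ᵥ x = w ⬝ᵥ P *ᵥ A *ᵥ x + q ⬝ᵥ A *ᵥ x - p ⬝ᵥ (B * S⁻¹ * G) *ᵥ x := by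
    rw [mulVec_dotProduct, transpose_transpose, hF, sub_mulVec, dotProduct_sub,
      ← Matrix.mul_assoc, add_dotProduct, mulVec_dotProduct P, hP.eq]
  have hvalue : x ⬝ᵥ Q *ᵥ x + x ⬝ᵥ (Aᵀ * P * A) *ᵥ x - x ⬝ᵥ (Aᵀ * P * B * S⁻¹ * G) *ᵥ x
      = x ⬝ᵥ P *ᵥ x := by
    conv_rhs => rw [hDARE]
    rw [sub_mulVec, add_mulVec, dotProduct_sub, dotProduct_add]
  rw [hd, hgain, hstate, hclosed, dotProduct_add q]
  linear_combination hvalue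

lemma bellman_step (hP : P.IsSymm) (hS : S = R + Bᵀ * P * B) (hSsymm : S.IsSymm)
    (hdet : IsUnit S.det) (hDARE : P = Q + Aᵀ * P * A - Aᵀ * P * B * S⁻¹ * (Bᵀ * P * A))
    (hF : F = A - B * (S⁻¹ * (Bᵀ * P * A))) (x w q : ι → α) (u : κ → α) :
    x ⬝ᵥ Q *ᵥ x + u ⬝ᵥ R *ᵥ u
        + ((A *ᵥ x + B *ᵥ u + w) ⬝ᵥ P *ᵥ (A *ᵥ x + B *ᵥ u + w)
          + 2 * (q ⬝ᵥ (A *ᵥ x + B *ᵥ u + w)))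
      = x ⬝ᵥ P *ᵥ x + 2 * (Fᵀ *ᵥ (P *ᵥ w + q) ⬝ᵥ x)
        + (w ⬝ᵥ P *ᵥ w + 2 * (q ⬝ᵥ w) - (P *ᵥ w + q) ⬝ᵥ (B * S⁻¹ * Bᵀ) *ᵥ (P *ᵥ w + q))
        + (u + (S⁻¹ * Bᵀ) *ᵥ (P *ᵥ (A *ᵥ x) + (P *ᵥ w + q))) ⬝ᵥ
            S *ᵥ (u + (S⁻¹ * Bᵀ) *ᵥ (P *ᵥ (A *ᵥ x) + (P *ᵥ w + q))) := by
  have hSinv : S⁻¹.IsSymm := by rw [IsSymm, transpose_nonsing_inv, hSsymm.eq]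
  set d := Bᵀ *ᵥ (P *ᵥ (A *ᵥ x + w) + q) with hd
  have hgain : (S⁻¹ * Bᵀ) *ᵥ (P *ᵥ (A *ᵥ x) + (P *ᵥ w + q)) = S⁻¹ *ᵥ d := by
    rw [← mulVec_mulVec, ← add_assoc, ← mulVec_add]
  have hexpand : u ⬝ᵥ R *ᵥ u
        + ((A *ᵥ x + w + B *ᵥ u) ⬝ᵥ P *ᵥ (A *ᵥ x + w + B *ᵥ u)
          + 2 * (q ⬝ᵥ (A *ᵥ x + w + B *ᵥ u)))
      = (A *ᵥ x + w) ⬝ᵥ P *ᵥ (A *ᵥ x + w) + 2 * (q ⬝ᵥ (A *ᵥ x + w))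
        + (u ⬝ᵥ S *ᵥ u + 2 * (u ⬝ᵥ d)) := by
    rw [add_dotProduct_mulVec_add hP, mulVec_dotProduct_mulVec_mulVec, mulVec_dotProduct,
      dotProduct_add q _ (B *ᵥ u), dotProduct_comm q (B *ᵥ u), mulVec_dotProduct]
    simp only [hd, hS, add_mulVec, mulVec_add, dotProduct_add]
    ring
  rw [show A *ᵥ x + B *ᵥ u + w = A *ᵥ x + w + B *ᵥ u by abel, add_assoc, hexpand,
    dotProduct_mulVec_add_two_mul_dotProduct hSsymm hdet, hgain]
  linear_combination riccati_value_step hP hSinv hDARE hF x w q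

end Riccati

section Feedback

variable {ι κ α : Type*} [Fintype ι] [DecidableEq ι] [Fintype κ] [DecidableEq κ] [CommRing α]

noncomputable def costate (F P : Matrix ι ι α) (w : ℕ → ι → α) (T : ℕ) : ι → α :=
  ∑ i ∈ Finset.range T, ((Fᵀ) ^ i * P) *ᵥ w i

lemma costate_zero (F P : Matrix ι ι α) (w : ℕ → ι → α) : costate F P w 0 = 0 := by
  simp [costate]

lemma costate_succ (F P : Matrix ι ι α) (w : ℕ → ι → α) (T : ℕ) :
    costate F P w (T + 1) = P *ᵥ w 0 + Fᵀ *ᵥ costate F P (fun i => w (i + 1)) T := by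
  simp only [costate, Finset.sum_range_succ', pow_zero, one_mul, mulVec_sum, mulVec_mulVec,
    pow_succ', Matrix.mul_assoc]
  abel

/-- The feedback `κₜ` of the horizon-`T` problem; only `t < T` occurs, so `T - t` does not
truncate. -/
noncomputable def optimalFeedback (A P F : Matrix ι ι α) (B : Matrix ι κ α) (S : Matrix κ κ α)
    (w : ℕ → ι → α) (T t : ℕ) (x : ι → α) : κ → α :=
  -((S⁻¹ * Bᵀ) *ᵥ (P *ᵥ (A *ᵥ x) + costate F P (fun i => w (i + t)) (T - t)))

lemma optimalFeedback_succ (A P F : Matrix ι ι α) (B : Matrix ι κ α) (S : Matrix κ κ α)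
    (w : ℕ → ι → α) (T t : ℕ) (x : ι → α) :
    optimalFeedback A P F B S w (T + 1) (t + 1) x
      = optimalFeedback A P F B S (fun i => w (i + 1)) T t x := by
  simp only [optimalFeedback, Nat.add_sub_add_right]
  rfl

end Feedback

section Trajectories

variable {n m : ℕ} {A : Matrix (Fin n) (Fin n) ℝ} {B : Matrix (Fin n) (Fin m) ℝ}

lemma seqState_shift (x0 : Fin n → ℝ) (u : ℕ → Fin m → ℝ) (w : ℕ → Fin n → ℝ) (t : ℕ) :
    seqState A B (A *ᵥ x0 + B *ᵥ u 0 + w 0) (fun i => u (i + 1)) (fun i => w (i + 1)) t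
      = seqState A B x0 u w (t + 1) := by
  induction t with
  | zero => rfl
  | succ t ih => simp only [seqState, ih]

lemma seqState_congr {x0 : Fin n → ℝ} {u v : ℕ → Fin m → ℝ} {w : ℕ → Fin n → ℝ} {t : ℕ}
    (h : ∀ s < t, u s = v s) : seqState A B x0 u w t = seqState A B x0 v w t := by
  induction t with
  | zero => rfl
  | succ t ih =>
    simp only [seqState, ih fun s hs => h s (hs.trans t.lt_succ_self), h t t.lt_succ_self]

lemma trajCost_congr {Q Qf : Matrix (Fin n) (Fin n) ℝ} {R : Matrix (Fin m) (Fin m) ℝ}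
    {x0 : Fin n → ℝ} {w : ℕ → Fin n → ℝ} {T : ℕ} {u v : ℕ → Fin m → ℝ}
    (h : ∀ t < T, u t = v t) :
    trajCost A B Q R Qf x0 w T u = trajCost A B Q R Qf x0 w T v := by
  unfold trajCost
  congr 1
  · refine Finset.sum_congr rfl fun t ht => ?_
    have ht := Finset.mem_range.mp ht
    rw [seqState_congr fun s hs => h s (hs.trans ht), h t ht]
  · rw [seqState_congr h]

lemma trajCost_succ (Q Qf : Matrix (Fin n) (Fin n) ℝ) (R : Matrix (Fin m) (Fin m) ℝ)
    (x0 : Fin n → ℝ) (w : ℕ → Fin n → ℝ) (T : ℕ) (u : ℕ → Fin m → ℝ) :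
    trajCost A B Q R Qf x0 w (T + 1) u
      = x0 ⬝ᵥ Q *ᵥ x0 + u 0 ⬝ᵥ R *ᵥ u 0
        + trajCost A B Q R Qf (A *ᵥ x0 + B *ᵥ u 0 + w 0) (fun i => w (i + 1)) T
            (fun i => u (i + 1)) := by
  simp only [trajCost, Finset.sum_range_succ', seqState_shift]
  simp only [seqState]
  ring

noncomputable def closedLoopState (A : Matrix (Fin n) (Fin n) ℝ) (B : Matrix (Fin n) (Fin m) ℝ)
    (f : ℕ → (Fin n → ℝ) → Fin m → ℝ) (x0 : Fin n → ℝ) (w : ℕ → Fin n → ℝ) : ℕ → Fin n → ℝ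
  | 0 => x0
  | t + 1 => A *ᵥ closedLoopState A B f x0 w t + B *ᵥ f t (closedLoopState A B f x0 w t) + w t

noncomputable def closedLoopControl (A : Matrix (Fin n) (Fin n) ℝ)
    (B : Matrix (Fin n) (Fin m) ℝ) (f : ℕ → (Fin n → ℝ) → Fin m → ℝ) (x0 : Fin n → ℝ)
    (w : ℕ → Fin n → ℝ) (t : ℕ) : Fin m → ℝ :=
  f t (closedLoopState A B f x0 w t)

lemma seqState_closedLoopControl (f : ℕ → (Fin n → ℝ) → Fin m → ℝ) (x0 : Fin n → ℝ)
    (w : ℕ → Fin n → ℝ) (t : ℕ) :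
    seqState A B x0 (closedLoopControl A B f x0 w) w t = closedLoopState A B f x0 w t := by
  induction t with
  | zero => rfl
  | succ t ih => rw [seqState, ih]; rfl

lemma forall_lt_eq_feedback_iff {f : ℕ → (Fin n → ℝ) → Fin m → ℝ} {x0 : Fin n → ℝ}
    {w : ℕ → Fin n → ℝ} {T : ℕ} {u : ℕ → Fin m → ℝ} :
    (∀ t < T, u t = f t (seqState A B x0 u w t))
      ↔ ∀ t < T, u t = closedLoopControl A B f x0 w t := by
  constructor
  · intro h t
    induction t using Nat.strong_induction_on with
    | _ t ih =>
      intro ht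
      rw [h t ht, seqState_congr fun s hs => ih s hs (hs.trans ht), seqState_closedLoopControl]
      rfl
  · intro h t ht
    rw [h t ht, seqState_congr fun s hs => h s (hs.trans ht), seqState_closedLoopControl]
    rfl

end Trajectories

section PosDef

variable {ι : Type*} {S : Matrix ι ι ℝ}

lemma Matrix.PosDef.isSymm (hS : S.PosDef) : S.IsSymm := by
  simpa [IsSymm] using hS.isHermitian.eq

variable [Fintype ι]

lemma Matrix.PosDef.dotProduct_mulVec_self_nonneg (hS : S.PosDef) (x : ι → ℝ) :
    0 ≤ x ⬝ᵥ S *ᵥ x := by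
  simpa using hS.posSemidef.dotProduct_mulVec_nonneg x

lemma Matrix.PosDef.dotProduct_mulVec_self_eq_zero_iff (hS : S.PosDef) {x : ι → ℝ} :
    x ⬝ᵥ S *ᵥ x = 0 ↔ x = 0 := by
  refine ⟨fun h => ?_, fun h => by simp [h]⟩
  by_contra hx
  simpa [h] using hS.dotProduct_mulVec_pos hx

end PosDef

section Optimality

variable {n m : ℕ} {A Q P F : Matrix (Fin n) (Fin n) ℝ} {B : Matrix (Fin n) (Fin m) ℝ}
  {R S : Matrix (Fin m) (Fin m) ℝ}

theorem exists_trajCost_eq_add_sum (hP : P.IsSymm) (hS : S = R + Bᵀ * P * B)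
    (hSsymm : S.IsSymm) (hdet : IsUnit S.det)
    (hDARE : P = Q + Aᵀ * P * A - Aᵀ * P * B * S⁻¹ * (Bᵀ * P * A))
    (hF : F = A - B * (S⁻¹ * (Bᵀ * P * A))) (T : ℕ) (w : ℕ → Fin n → ℝ) :
    ∃ c : ℝ, ∀ x0 u, trajCost A B Q R P x0 w T u
      = x0 ⬝ᵥ P *ᵥ x0 + 2 * (Fᵀ *ᵥ costate F P w T ⬝ᵥ x0) + c
        + ∑ t ∈ Finset.range T,
            (u t - optimalFeedback A P F B S w T t (seqState A B x0 u w t)) ⬝ᵥ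
              S *ᵥ (u t - optimalFeedback A P F B S w T t (seqState A B x0 u w t)) := by
  induction T generalizing w with
  | zero => exact ⟨0, fun x0 u => by simp [trajCost, seqState, costate_zero]⟩
  | succ T ih =>
    obtain ⟨c, hc⟩ := ih fun i => w (i + 1)
    set q := Fᵀ *ᵥ costate F P (fun i => w (i + 1)) T
    refine ⟨c + (w 0 ⬝ᵥ P *ᵥ w 0 + 2 * (q ⬝ᵥ w 0)
      - (P *ᵥ w 0 + q) ⬝ᵥ (B * S⁻¹ * Bᵀ) *ᵥ (P *ᵥ w 0 + q)), fun x0 u => ?_⟩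
    have hfirst : u 0 - optimalFeedback A P F B S w (T + 1) 0 (seqState A B x0 u w 0)
        = u 0 + (S⁻¹ * Bᵀ) *ᵥ (P *ᵥ (A *ᵥ x0) + (P *ᵥ w 0 + q)) := by
      rw [sub_eq_add_neg, optimalFeedback, neg_neg, Nat.sub_zero, costate_succ]
      rfl
    rw [trajCost_succ, hc, Finset.sum_range_succ', hfirst, costate_succ]
    simp only [seqState_shift, optimalFeedback_succ]
    linear_combination bellman_step hP hS hSsymm hdet hDARE hF x0 (w 0) q (u 0)

theorem trajCost_isMinimizer_iff (hP : P.PosDef) (hR : R.PosDef) (hS : S = R + Bᵀ * P * B)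
    (hDARE : P = Q + Aᵀ * P * A - Aᵀ * P * B * S⁻¹ * (Bᵀ * P * A))
    (hF : F = A - B * (S⁻¹ * (Bᵀ * P * A))) (x0 : Fin n → ℝ) (w : ℕ → Fin n → ℝ) (T : ℕ)
    (u : ℕ → Fin m → ℝ) :
    (∀ v, trajCost A B Q R P x0 w T u ≤ trajCost A B Q R P x0 w T v)
      ↔ ∀ t < T, u t = closedLoopControl A B (optimalFeedback A P F B S w T) x0 w t := by
  have hSpd : S.PosDef := hS ▸ hR.add_posSemidef (hP.posSemidef.conjTranspose_mul_mul_same B)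
  obtain ⟨c, hc⟩ := exists_trajCost_eq_add_sum hP.isSymm hS hSpd.isSymm
    (isUnit_iff_ne_zero.2 hSpd.det_pos.ne') hDARE hF T w
  set f := optimalFeedback A P F B S w T
  set gap := fun v : ℕ → Fin m → ℝ => ∑ t ∈ Finset.range T,
    (v t - f t (seqState A B x0 v w t)) ⬝ᵥ S *ᵥ (v t - f t (seqState A B x0 v w t))
  have hcost (v) : trajCost A B Q R P x0 w T v
      = x0 ⬝ᵥ P *ᵥ x0 + 2 * (Fᵀ *ᵥ costate F P w T ⬝ᵥ x0) + c + gap v := hc x0 v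
  have hgap_nonneg (v) : 0 ≤ gap v :=
    Finset.sum_nonneg fun t _ => hSpd.dotProduct_mulVec_self_nonneg _
  have hgap_eq_zero (v) : gap v = 0 ↔ ∀ t < T, v t = closedLoopControl A B f x0 w t := by
    rw [← forall_lt_eq_feedback_iff, Finset.sum_eq_zero_iff_of_nonneg
      fun t _ => hSpd.dotProduct_mulVec_self_nonneg _]
    simp only [hSpd.dotProduct_mulVec_self_eq_zero_iff, sub_eq_zero, Finset.mem_range]
  have hgap_opt := (hgap_eq_zero (closedLoopControl A B f x0 w)).2 fun _ _ => rfl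
  constructor
  · intro hu
    have := hu (closedLoopControl A B f x0 w)
    rw [hcost, hcost, hgap_opt] at this
    exact (hgap_eq_zero u).1 (le_antisymm (by linarith) (hgap_nonneg u))
  · intro hu v
    rw [hcost, hcost, (hgap_eq_zero u).2 hu]
    linarith [hgap_nonneg v]

theorem mpcCost_isMinimizer_iff (hP : P.PosDef) (hR : R.PosDef) (hS : S = R + Bᵀ * P * B)
    (hDARE : P = Q + Aᵀ * P * A - Aᵀ * P * B * S⁻¹ * (Bᵀ * P * A))
    (hF : F = A - B * (S⁻¹ * (Bᵀ * P * A))) (z : Fin n → ℝ) (w : ℕ → Fin n → ℝ) (k : ℕ)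
    (u : Fin k → Fin m → ℝ) :
    (∀ v, mpcCost A B Q R P z w k u ≤ mpcCost A B Q R P z w k v)
      ↔ ∀ t : Fin k, u t = closedLoopControl A B (optimalFeedback A P F B S w k) z w t := by
  have hext : (∀ v, mpcCost A B Q R P z w k u ≤ mpcCost A B Q R P z w k v)
      ↔ ∀ v, mpcCost A B Q R P z w k u ≤ trajCost A B Q R P z w k v := by
    refine ⟨fun h v => ?_, fun h v => h _⟩
    calc mpcCost A B Q R P z w k u ≤ mpcCost A B Q R P z w k (fun i => v i) := h _
      _ = trajCost A B Q R P z w k v := trajCost_congr fun t ht => dif_pos ht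
  rw [hext, mpcCost, trajCost_isMinimizer_iff hP hR hS hDARE hF]
  exact ⟨fun h t => by simpa using h t t.2, fun h t ht => by simpa [ht] using h ⟨t, ht⟩⟩

end Optimality

theorem stmt0_general (n m k : ℕ) (hk : 1 ≤ k)
    (A : Matrix (Fin n) (Fin n) ℝ) (B : Matrix (Fin n) (Fin m) ℝ)
    (Q : Matrix (Fin n) (Fin n) ℝ) (R : Matrix (Fin m) (Fin m) ℝ)
    (P : Matrix (Fin n) (Fin n) ℝ)
    (hR : R.PosDef) (hP : P.PosDef)
    (hDARE : P = Q + Aᵀ * P * A - Aᵀ * P * B * (R + Bᵀ * P * B)⁻¹ * (Bᵀ * P * A))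
    (F : Matrix (Fin n) (Fin n) ℝ)
    (hF : F = A - B * ((R + Bᵀ * P * B)⁻¹ * (Bᵀ * P * A)))
    (z : Fin n → ℝ) (what : ℕ → Fin n → ℝ) :
    (∃! u : Fin k → Fin m → ℝ,
      ∀ v : Fin k → Fin m → ℝ, mpcCost A B Q R P z what k u ≤ mpcCost A B Q R P z what k v) ∧
    ∀ u : Fin k → Fin m → ℝ,
      (∀ v : Fin k → Fin m → ℝ, mpcCost A B Q R P z what k u ≤ mpcCost A B Q R P z what k v) →
      u ⟨0, hk⟩ = -((((R + Bᵀ * P * B)⁻¹ * Bᵀ) *ᵥ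
        (P *ᵥ (A *ᵥ z) + ∑ i ∈ Finset.range k, ((Fᵀ) ^ i * P) *ᵥ what i))) := by
  set S := R + Bᵀ * P * B with hS
  have key := mpcCost_isMinimizer_iff hP hR hS hDARE hF z what k
  set uStar := closedLoopControl A B (optimalFeedback A P F B S what k) z what
  exact ⟨⟨fun t => uStar t, (key _).2 fun _ => rfl, fun u hu => funext ((key u).1 hu)⟩,
    fun u hu => (key u).1 hu ⟨0, hk⟩⟩

theorem stmt0 (n m k : ℕ) (hk : 1 ≤ k)
    (A : Matrix (Fin n) (Fin n) ℝ) (B : Matrix (Fin n) (Fin m) ℝ)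
    (Q : Matrix (Fin n) (Fin n) ℝ) (R : Matrix (Fin m) (Fin m) ℝ)
    (P : Matrix (Fin n) (Fin n) ℝ)
    (hQ : Q.PosSemidef) (hR : R.PosDef) (hP : P.PosDef)
    (hDARE : P = Q + Aᵀ * P * A - Aᵀ * P * B * (R + Bᵀ * P * B)⁻¹ * (Bᵀ * P * A))
    (F : Matrix (Fin n) (Fin n) ℝ)
    (hF : F = A - B * ((R + Bᵀ * P * B)⁻¹ * (Bᵀ * P * A)))
    (z : Fin n → ℝ) (what : ℕ → Fin n → ℝ) :
    (∃! u : Fin k → Fin m → ℝ,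
      ∀ v : Fin k → Fin m → ℝ, mpcCost A B Q R P z what k u ≤ mpcCost A B Q R P z what k v) ∧
    ∀ u : Fin k → Fin m → ℝ,
      (∀ v : Fin k → Fin m → ℝ, mpcCost A B Q R P z what k u ≤ mpcCost A B Q R P z what k v) →
      u ⟨0, hk⟩ = -((((R + Bᵀ * P * B)⁻¹ * Bᵀ) *ᵥ
        (P *ᵥ (A *ᵥ z) + ∑ i ∈ Finset.range k, ((Fᵀ) ^ i * P) *ᵥ what i))) :=
  stmt0_general n m k hk A B Q R P hR hP hDARE F hF z what
end

section
/- Assume Q_f = P. For any η_0,…,η_{T−1} ∈ ℝ^n, define the control sequence u^η in closed loop by u^η_t = −(R + BᵀPB)⁻¹ Bᵀ (P A x_t + ψ_t − η_t), where x is the trajectory generated by u^η from x_0. Then J(u^η) = Σ_{t=0}^{T−1}( w_tᵀ P w_t + 2 w_tᵀ Σ_{i=1}^{T−t−1} (Fᵀ)^i P w_{t+i} − ψ_tᵀ H ψ_t ) + Σ_{t=0}^{T−1} η_tᵀ H η_t + x_0ᵀ P x_0 + 2 x_0ᵀ Σ_{i=0}^{T−1} (Fᵀ)^{i+1} P w_i.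 -/
open Matrix

/-
Completing the square with the Riccati equation gives, for `x' = A x + B u + w`,
`xᵀQx + uᵀRu + x'ᵀPx' = xᵀPx + (u + Kx)ᵀ(R + BᵀPB)(u + Kx) + 2 (Ax + Bu)ᵀPw + wᵀPw`,
and under the feedback `u^η` the square is `vᵀHv` with `v = ψ - η`, while `Ax + Bu = Fx - Hv`.
With `V_t = x_tᵀPx_t + 2 x_tᵀFᵀψ_t` and the backward recursion `ψ_t = P w_t + Fᵀψ_{t+1}`,
each stage cost is `V_t - V_{t+1}` plus a term not involving `x`; the sum telescopes, and
`V_T = x_TᵀPx_T` because `ψ_T = 0`.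
-/

namespace Matrix

lemma IsSymm.add_transpose_mul_mul {ι κ 𝕜 : Type*} [Fintype ι] [CommSemiring 𝕜]
    {R : Matrix κ κ 𝕜} {P : Matrix ι ι 𝕜} (hR : R.IsSymm) (hP : P.IsSymm) (B : Matrix ι κ 𝕜) :
    (R + Bᵀ * P * B).IsSymm :=
  hR.add (by simp [IsSymm, transpose_mul, hP.eq, Matrix.mul_assoc])

variable {ι κ ν 𝕜 : Type*} [Fintype ι] [Fintype κ] [Fintype ν] [CommRing 𝕜]

lemma mulVec_dotProduct_mulVec (M : Matrix κ ι 𝕜) (N : Matrix κ ν 𝕜) (x : ι → 𝕜) (y : ν → 𝕜) :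
    M *ᵥ x ⬝ᵥ N *ᵥ y = x ⬝ᵥ (Mᵀ * N) *ᵥ y := by
  rw [← mulVec_mulVec, dotProduct_transpose_mulVec, dotProduct_comm]

lemma IsSymm.dotProduct_mulVec_comm {M : Matrix ι ι 𝕜} (hM : M.IsSymm) (x y : ι → 𝕜) :
    x ⬝ᵥ M *ᵥ y = y ⬝ᵥ M *ᵥ x := by
  rw [← dotProduct_transpose_mulVec, hM.eq]

lemma IsSymm.add_dotProduct_mulVec_add {M : Matrix ι ι 𝕜} (hM : M.IsSymm) (x y : ι → 𝕜) :
    (x + y) ⬝ᵥ M *ᵥ (x + y) = x ⬝ᵥ M *ᵥ x + 2 * (x ⬝ᵥ M *ᵥ y) + y ⬝ᵥ M *ᵥ y := by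
  rw [mulVec_add, dotProduct_add, add_dotProduct, add_dotProduct, hM.dotProduct_mulVec_comm y x]
  ring

end Matrix

section Riccati

variable {ι κ 𝕜 : Type*} [Fintype ι] [Fintype κ] [DecidableEq κ] [CommRing 𝕜]
  {A Q P : Matrix ι ι 𝕜} {B : Matrix ι κ 𝕜} {R : Matrix κ κ 𝕜}

theorem riccati_complete_square (hP : P.IsSymm) (hR : R.IsSymm)
    (hS : IsUnit (R + Bᵀ * P * B).det)
    (hDARE : P = Q + Aᵀ * P * A - Aᵀ * P * B * (R + Bᵀ * P * B)⁻¹ * (Bᵀ * P * A))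
    (x : ι → 𝕜) (u : κ → 𝕜) :
    x ⬝ᵥ Q *ᵥ x + u ⬝ᵥ R *ᵥ u + (A *ᵥ x + B *ᵥ u) ⬝ᵥ P *ᵥ (A *ᵥ x + B *ᵥ u) =
      x ⬝ᵥ P *ᵥ x + (u + ((R + Bᵀ * P * B)⁻¹ * (Bᵀ * P * A)) *ᵥ x) ⬝ᵥ
        (R + Bᵀ * P * B) *ᵥ (u + ((R + Bᵀ * P * B)⁻¹ * (Bᵀ * P * A)) *ᵥ x) := by
  set S := R + Bᵀ * P * B with hSdef
  set K := S⁻¹ * (Bᵀ * P * A)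
  have hSsymm : S.IsSymm := hR.add_transpose_mul_mul hP B
  have hSK : S * K = Bᵀ * P * A := mul_nonsing_inv_cancel_left _ _ hS
  have hQ : Q = P - Aᵀ * P * A + Kᵀ * S * K := by
    have hKSK : Kᵀ * S * K = Aᵀ * P * B * S⁻¹ * (Bᵀ * P * A) := by
      rw [Matrix.mul_assoc, hSK]
      simp [K, transpose_mul, hP.eq, hSsymm.inv.eq, Matrix.mul_assoc]
    calc Q = (Q + Aᵀ * P * A - Aᵀ * P * B * S⁻¹ * (Bᵀ * P * A)) - Aᵀ * P * A
          + Aᵀ * P * B * S⁻¹ * (Bᵀ * P * A) := by abel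
      _ = P - Aᵀ * P * A + Kᵀ * S * K := by rw [← hDARE, hKSK]
  have hxQx : x ⬝ᵥ Q *ᵥ x = x ⬝ᵥ P *ᵥ x - A *ᵥ x ⬝ᵥ P *ᵥ (A *ᵥ x) + K *ᵥ x ⬝ᵥ S *ᵥ (K *ᵥ x) := by
    simp only [hQ, add_mulVec, sub_mulVec, dotProduct_add, dotProduct_sub,
      mulVec_mulVec, mulVec_dotProduct_mulVec, Matrix.mul_assoc]
  have huSu : u ⬝ᵥ S *ᵥ u = u ⬝ᵥ R *ᵥ u + B *ᵥ u ⬝ᵥ P *ᵥ (B *ᵥ u) := by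
    simp only [hSdef, add_mulVec, dotProduct_add, mulVec_mulVec, mulVec_dotProduct_mulVec,
      Matrix.mul_assoc]
  have huSKx : u ⬝ᵥ S *ᵥ (K *ᵥ x) = B *ᵥ u ⬝ᵥ P *ᵥ (A *ᵥ x) := by
    rw [mulVec_mulVec, hSK, mulVec_dotProduct_mulVec, mulVec_mulVec, Matrix.mul_assoc]
  rw [hP.add_dotProduct_mulVec_add, hSsymm.add_dotProduct_mulVec_add, hxQx, huSu, huSKx,
    hP.dotProduct_mulVec_comm (A *ᵥ x) (B *ᵥ u)]
  ring

theorem riccati_stage_identity (hP : P.IsSymm) (hR : R.IsSymm)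
    (hS : IsUnit (R + Bᵀ * P * B).det)
    (hDARE : P = Q + Aᵀ * P * A - Aᵀ * P * B * (R + Bᵀ * P * B)⁻¹ * (Bᵀ * P * A))
    {F H : Matrix ι ι 𝕜} (hF : F = A - B * ((R + Bᵀ * P * B)⁻¹ * (Bᵀ * P * A)))
    (hH : H = B * (R + Bᵀ * P * B)⁻¹ * Bᵀ)
    {x w ψ ψ' η : ι → 𝕜} {u : κ → 𝕜} (hψ : ψ = P *ᵥ w + Fᵀ *ᵥ ψ')
    (hu : u = -(((R + Bᵀ * P * B)⁻¹ * Bᵀ) *ᵥ (P *ᵥ (A *ᵥ x) + ψ - η))) :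
    x ⬝ᵥ Q *ᵥ x + u ⬝ᵥ R *ᵥ u
        + ((A *ᵥ x + B *ᵥ u + w) ⬝ᵥ P *ᵥ (A *ᵥ x + B *ᵥ u + w)
          + 2 * ((A *ᵥ x + B *ᵥ u + w) ⬝ᵥ Fᵀ *ᵥ ψ')) =
      x ⬝ᵥ P *ᵥ x + 2 * (x ⬝ᵥ Fᵀ *ᵥ ψ)
        + (w ⬝ᵥ P *ᵥ w + 2 * (w ⬝ᵥ Fᵀ *ᵥ ψ') - ψ ⬝ᵥ H *ᵥ ψ + η ⬝ᵥ H *ᵥ η) := by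
  set S := R + Bᵀ * P * B with hSdef
  set K := S⁻¹ * (Bᵀ * P * A) with hK
  set G := S⁻¹ * Bᵀ with hG
  set v := ψ - η with hv
  set y := A *ᵥ x + B *ᵥ u with hy
  have hSsymm : S.IsSymm := hR.add_transpose_mul_mul hP B
  have hHsymm : H.IsSymm := by simp [hH, IsSymm, transpose_mul, hSsymm.inv.eq, Matrix.mul_assoc]
  have hfeedback : u + K *ᵥ x = -(G *ᵥ v) := by
    rw [hu, hv, add_sub_assoc, mulVec_add, mulVec_mulVec, mulVec_mulVec]
    simp only [hK, hG, Matrix.mul_assoc]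
    abel
  have hclosed : y = F *ᵥ x - H *ᵥ v := by
    rw [hy, hF, hH, eq_sub_of_add_eq hfeedback, mulVec_sub, mulVec_neg, sub_mulVec,
      mulVec_mulVec, mulVec_mulVec, hG, Matrix.mul_assoc]
    abel
  have hsquare : (G *ᵥ v) ⬝ᵥ S *ᵥ (G *ᵥ v) = v ⬝ᵥ H *ᵥ v := by
    rw [mulVec_mulVec, mulVec_dotProduct_mulVec, hG, hH, Matrix.mul_assoc,
      mul_nonsing_inv_cancel_left _ _ hS]
    simp [transpose_mul, hSsymm.inv.eq, Matrix.mul_assoc]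
  have hcompl : x ⬝ᵥ Q *ᵥ x + u ⬝ᵥ R *ᵥ u + y ⬝ᵥ P *ᵥ y = x ⬝ᵥ P *ᵥ x + v ⬝ᵥ H *ᵥ v := by
    rw [riccati_complete_square hP hR hS hDARE, hfeedback, mulVec_neg, neg_dotProduct_neg, hsquare]
  have hcross : y ⬝ᵥ P *ᵥ w + y ⬝ᵥ Fᵀ *ᵥ ψ' = x ⬝ᵥ Fᵀ *ᵥ ψ - v ⬝ᵥ H *ᵥ ψ := by
    rw [← dotProduct_add, ← hψ, hclosed, sub_dotProduct, dotProduct_transpose_mulVec,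
      dotProduct_comm, dotProduct_comm (H *ᵥ v), hHsymm.dotProduct_mulVec_comm ψ]
  have hshift : v ⬝ᵥ H *ᵥ v - 2 * (v ⬝ᵥ H *ᵥ ψ) = η ⬝ᵥ H *ᵥ η - ψ ⬝ᵥ H *ᵥ ψ := by
    simp only [hv, mulVec_sub, dotProduct_sub, sub_dotProduct, hHsymm.dotProduct_mulVec_comm η ψ]
    ring
  rw [hP.add_dotProduct_mulVec_add y w, add_dotProduct y w]
  linear_combination hcompl + 2 * hcross + hshift

end Riccati

section BackwardSum

open Finset

variable {ι 𝕜 : Type*} [Fintype ι] [DecidableEq ι] [CommRing 𝕜]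

lemma mulVec_sum_pow_mul_mulVec (M N : Matrix ι ι 𝕜) (w : ℕ → ι → 𝕜) (k : ℕ) :
    M *ᵥ ∑ i ∈ range k, (M ^ i * N) *ᵥ w i = ∑ i ∈ range k, (M ^ (i + 1) * N) *ᵥ w i := by
  rw [mulVec_sum]
  exact sum_congr rfl fun i _ => by rw [mulVec_mulVec, pow_succ', Matrix.mul_assoc]

variable {M N : Matrix ι ι 𝕜} {w ψ : ℕ → ι → 𝕜} {T : ℕ}

lemma sum_Ico_one_pow_mul_mulVec_eq_mulVec_succ (hψ : ∀ t, ψ t = ∑ i ∈ range (T - t), (M ^ i * N) *ᵥ w (t + i))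
    (t : ℕ) : ∑ i ∈ Ico 1 (T - t), (M ^ i * N) *ᵥ w (t + i) = M *ᵥ ψ (t + 1) := by
  rw [hψ, mulVec_sum_pow_mul_mulVec M N (fun i => w (t + 1 + i)), sum_Ico_eq_sum_range,
    Nat.sub_sub]
  exact sum_congr rfl fun i _ => by rw [add_comm 1 i, add_assoc, add_comm 1 i]

lemma eq_mulVec_add_mulVec_succ (hψ : ∀ t, ψ t = ∑ i ∈ range (T - t), (M ^ i * N) *ᵥ w (t + i))
    {t : ℕ} (ht : t < T) : ψ t = N *ᵥ w t + M *ᵥ ψ (t + 1) := by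
  rw [← sum_Ico_one_pow_mul_mulVec_eq_mulVec_succ hψ, hψ, sum_range_eq_add_Ico _ (Nat.sub_pos_of_lt ht)]
  simp

end BackwardSum

theorem stmt2_general (n m T : ℕ)
    (A : Matrix (Fin n) (Fin n) ℝ) (B : Matrix (Fin n) (Fin m) ℝ)
    (Q : Matrix (Fin n) (Fin n) ℝ) (R : Matrix (Fin m) (Fin m) ℝ)
    (P : Matrix (Fin n) (Fin n) ℝ)
    (hR : R.PosDef) (hP : P.PosDef)
    (hDARE : P = Q + Aᵀ * P * A - Aᵀ * P * B * (R + Bᵀ * P * B)⁻¹ * (Bᵀ * P * A))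
    (F : Matrix (Fin n) (Fin n) ℝ)
    (hF : F = A - B * ((R + Bᵀ * P * B)⁻¹ * (Bᵀ * P * A)))
    (Hmat : Matrix (Fin n) (Fin n) ℝ)
    (hHmat : Hmat = B * (R + Bᵀ * P * B)⁻¹ * Bᵀ)
    (x0 : Fin n → ℝ) (w η : ℕ → Fin n → ℝ)
    (ψ : ℕ → Fin n → ℝ)
    (hψ : ∀ t, ψ t = ∑ i ∈ Finset.range (T - t), ((Fᵀ) ^ i * P) *ᵥ w (t + i))
    (x : ℕ → Fin n → ℝ) (u : ℕ → Fin m → ℝ)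
    (hx0 : x 0 = x0)
    (hx : ∀ t, x (t + 1) = A *ᵥ x t + B *ᵥ u t + w t)
    (hu : ∀ t, u t = -((((R + Bᵀ * P * B)⁻¹ * Bᵀ) *ᵥ (P *ᵥ (A *ᵥ x t) + ψ t - η t)))) :
    (∑ t ∈ Finset.range T, (x t ⬝ᵥ (Q *ᵥ x t) + u t ⬝ᵥ (R *ᵥ u t))) + x T ⬝ᵥ (P *ᵥ x T) =
      ∑ t ∈ Finset.range T, (w t ⬝ᵥ (P *ᵥ w t)
          + 2 * (w t ⬝ᵥ ∑ i ∈ Finset.Ico 1 (T - t), ((Fᵀ) ^ i * P) *ᵥ w (t + i))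
          - ψ t ⬝ᵥ (Hmat *ᵥ ψ t))
        + ∑ t ∈ Finset.range T, η t ⬝ᵥ (Hmat *ᵥ η t)
        + x0 ⬝ᵥ (P *ᵥ x0)
        + 2 * (x0 ⬝ᵥ ∑ i ∈ Finset.range T, ((Fᵀ) ^ (i + 1) * P) *ᵥ w i) := by
  have hPs : P.IsSymm := isHermitian_iff_isSymm.mp hP.isHermitian
  have hRs : R.IsSymm := isHermitian_iff_isSymm.mp hR.isHermitian
  have hS : IsUnit (R + Bᵀ * P * B).det := (isUnit_iff_isUnit_det _).mp
    (hR.add_posSemidef (by simpa using hP.posSemidef.conjTranspose_mul_mul_same B)).isUnit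
  set V : ℕ → ℝ := fun t => x t ⬝ᵥ P *ᵥ x t + 2 * (x t ⬝ᵥ Fᵀ *ᵥ ψ t) with hV
  have hstage : ∀ t ∈ Finset.range T, x t ⬝ᵥ Q *ᵥ x t + u t ⬝ᵥ R *ᵥ u t =
      (w t ⬝ᵥ P *ᵥ w t
          + 2 * (w t ⬝ᵥ ∑ i ∈ Finset.Ico 1 (T - t), ((Fᵀ) ^ i * P) *ᵥ w (t + i))
          - ψ t ⬝ᵥ Hmat *ᵥ ψ t + η t ⬝ᵥ Hmat *ᵥ η t) + (V t - V (t + 1)) := by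
    intro t ht
    have h := riccati_stage_identity hPs hRs hS hDARE hF hHmat
      (eq_mulVec_add_mulVec_succ hψ (Finset.mem_range.mp ht)) (hu t)
    rw [← hx t] at h
    rw [sum_Ico_one_pow_mul_mulVec_eq_mulVec_succ hψ, hV]
    linear_combination h
  have hV0 : V 0 = x0 ⬝ᵥ P *ᵥ x0
      + 2 * (x0 ⬝ᵥ ∑ i ∈ Finset.range T, ((Fᵀ) ^ (i + 1) * P) *ᵥ w i) := by
    simp [hV, hx0, hψ 0, mulVec_sum_pow_mul_mulVec]
  have hVT : V T = x T ⬝ᵥ P *ᵥ x T := by simp [hV, hψ T]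
  rw [Finset.sum_congr rfl hstage, Finset.sum_add_distrib, Finset.sum_range_sub', hV0, hVT,
    Finset.sum_add_distrib]
  ring

theorem stmt2 (n m T : ℕ)
    (A : Matrix (Fin n) (Fin n) ℝ) (B : Matrix (Fin n) (Fin m) ℝ)
    (Q : Matrix (Fin n) (Fin n) ℝ) (R : Matrix (Fin m) (Fin m) ℝ)
    (P : Matrix (Fin n) (Fin n) ℝ)
    (hQ : Q.PosSemidef) (hR : R.PosDef) (hP : P.PosDef)
    (hDARE : P = Q + Aᵀ * P * A - Aᵀ * P * B * (R + Bᵀ * P * B)⁻¹ * (Bᵀ * P * A))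
    (F : Matrix (Fin n) (Fin n) ℝ)
    (hF : F = A - B * ((R + Bᵀ * P * B)⁻¹ * (Bᵀ * P * A)))
    (Hmat : Matrix (Fin n) (Fin n) ℝ)
    (hHmat : Hmat = B * (R + Bᵀ * P * B)⁻¹ * Bᵀ)
    (x0 : Fin n → ℝ) (w η : ℕ → Fin n → ℝ)
    (ψ : ℕ → Fin n → ℝ)
    (hψ : ∀ t, ψ t = ∑ i ∈ Finset.range (T - t), ((Fᵀ) ^ i * P) *ᵥ w (t + i))
    (x : ℕ → Fin n → ℝ) (u : ℕ → Fin m → ℝ)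
    (hx0 : x 0 = x0)
    (hx : ∀ t, x (t + 1) = A *ᵥ x t + B *ᵥ u t + w t)
    (hu : ∀ t, u t = -((((R + Bᵀ * P * B)⁻¹ * Bᵀ) *ᵥ (P *ᵥ (A *ᵥ x t) + ψ t - η t)))) :
    (∑ t ∈ Finset.range T, (x t ⬝ᵥ (Q *ᵥ x t) + u t ⬝ᵥ (R *ᵥ u t))) + x T ⬝ᵥ (P *ᵥ x T) =
      ∑ t ∈ Finset.range T, (w t ⬝ᵥ (P *ᵥ w t)
          + 2 * (w t ⬝ᵥ ∑ i ∈ Finset.Ico 1 (T - t), ((Fᵀ) ^ i * P) *ᵥ w (t + i))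
          - ψ t ⬝ᵥ (Hmat *ᵥ ψ t))
        + ∑ t ∈ Finset.range T, η t ⬝ᵥ (Hmat *ᵥ η t)
        + x0 ⬝ᵥ (P *ᵥ x0)
        + 2 * (x0 ⬝ᵥ ∑ i ∈ Finset.range T, ((Fᵀ) ^ (i + 1) * P) *ᵥ w i) :=
  stmt2_general n m T A B Q R P hR hP hDARE F hF Hmat hHmat x0 w η ψ hψ x u hx0 hx hu
end

section
/- Let k ≥ d ≥ 0 and t ≥ d with t + k − d ≤ T. Suppose the controller, given predictions ŵ_{s|t} ∈ ℝ^n for s = t−d,…,t+k−d−1, forms the estimate x̂ of the current state by x̂_{t−d} = x_{t−d} and x̂_{s+1} = A x̂_s + B u_s + ŵ_{s|t} for s = t−d,…,t−1 (where x and u are the actual states and controls of the system), and applies u_t = −(R + BᵀPB)⁻¹ Bᵀ (P A x̂_t + Σ_{i=0}^{k−d−1} (Fᵀ)^i P ŵ_{t+i|t}). Then u_t = −(R + BᵀPB)⁻¹ Bᵀ (P A x_t + Σ_{i=0}^{T−t−1} (Fᵀ)^i P w_{t+i} − η_t) with η_t = Σ_{i=1}^{d} P A^i e_{t−i|t} +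 Σ_{i=0}^{k−d−1} (Fᵀ)^i P e_{t+i|t} + Σ_{i=k−d}^{T−t−1} (Fᵀ)^i P w_{t+i}, where e_{s|t} = w_s − ŵ_{s|t}. -/
open Matrix

/-!
On the `d` steps before `t` the estimate `xhat` and the true state `x` follow the same
recursion, driven by `what` and by `w` respectively, and they agree at `t - d`. Hence by variation of constants
`xhat t - x t = ∑_{i=1}^{d} A^{i-1} (what - w)(t - i)`, and `P A xhat t` is `P A x t` plus the
propagated past prediction errors. Splitting the full-horizon sum `∑_{i < T - t}` at `k - d`,
the claimed form of `u t` is a rearrangement of the controller's definition.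
-/

open Finset

section Recurrence

variable {ι κ R : Type*} [Fintype ι] [DecidableEq ι]

theorem eq_pow_mulVec_add_sum_of_recurrence [Semiring R] (A : Matrix ι ι R)
    {y v : ℕ → ι → R} {t d : ℕ} (hdt : d ≤ t)
    (hy : ∀ s, t - d ≤ s → s < t → y (s + 1) = A *ᵥ y s + v s) :
    y t = A ^ d *ᵥ y (t - d) + ∑ i ∈ range d, A ^ i *ᵥ v (t - 1 - i) := by
  induction d generalizing t with
  | zero => simp
  | succ d ih =>
    obtain ⟨t, rfl⟩ : ∃ t', t = t' + 1 := ⟨t - 1, by omega⟩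
    have hprev := ih (t := t) (by omega) fun s hs hst => hy s (by omega) (by omega)
    rw [hy t (by omega) (by omega), hprev, sum_range_succ', mulVec_add, mulVec_sum,
      mulVec_mulVec, ← pow_succ', show t + 1 - (d + 1) = t - d by omega]
    simp only [mulVec_mulVec, ← pow_succ', pow_zero, one_mulVec, add_tsub_cancel_right,
      Nat.sub_zero, add_assoc]
    congr 2
    refine sum_congr rfl fun i _ => ?_
    rw [show t - 1 - i = t - (i + 1) by omega]

theorem estimate_sub_state_eq [Fintype κ] [Ring R] {A : Matrix ι ι R} {B : Matrix ι κ R}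
    {x xhat w what : ℕ → ι → R} {u : ℕ → κ → R} {t d : ℕ} (hdt : d ≤ t)
    (hx : ∀ s, t - d ≤ s → s < t → x (s + 1) = A *ᵥ x s + B *ᵥ u s + w s)
    (hhat : ∀ s, t - d ≤ s → s < t → xhat (s + 1) = A *ᵥ xhat s + B *ᵥ u s + what s)
    (hinit : xhat (t - d) = x (t - d)) :
    xhat t - x t = ∑ i ∈ range d, A ^ i *ᵥ (what (t - 1 - i) - w (t - 1 - i)) := by
  have := eq_pow_mulVec_add_sum_of_recurrence A (y := xhat - x) (v := what - w) hdt
    fun s hs hst => by simp only [Pi.sub_apply, hhat s hs hst, hx s hs hst, mulVec_sub]; abel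
  simpa [hinit] using this

end Recurrence

theorem stmt6_general (n m T d k t : ℕ) (htd : d ≤ t) (htT : t + k - d ≤ T)
    (A : Matrix (Fin n) (Fin n) ℝ) (B : Matrix (Fin n) (Fin m) ℝ)
    (R : Matrix (Fin m) (Fin m) ℝ)
    (P : Matrix (Fin n) (Fin n) ℝ)
    (F : Matrix (Fin n) (Fin n) ℝ)
    (x : ℕ → Fin n → ℝ) (u : ℕ → Fin m → ℝ) (w what : ℕ → Fin n → ℝ)
    (xhat : ℕ → Fin n → ℝ)
    (hx : ∀ s, x (s + 1) = A *ᵥ x s + B *ᵥ u s + w s)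
    (hinit : xhat (t - d) = x (t - d))
    (hhat : ∀ s, t - d ≤ s → s < t → xhat (s + 1) = A *ᵥ xhat s + B *ᵥ u s + what s)
    (hu : u t = -((((R + Bᵀ * P * B)⁻¹ * Bᵀ) *ᵥ
        (P *ᵥ (A *ᵥ xhat t) + ∑ i ∈ Finset.range (k - d), ((Fᵀ) ^ i * P) *ᵥ what (t + i))))) :
    u t = -((((R + Bᵀ * P * B)⁻¹ * Bᵀ) *ᵥ
      (P *ᵥ (A *ᵥ x t) + (∑ i ∈ Finset.range (T - t), ((Fᵀ) ^ i * P) *ᵥ w (t + i))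
        - (∑ i ∈ Finset.Icc 1 d, (P * A ^ i) *ᵥ (w (t - i) - what (t - i))
          + ∑ i ∈ Finset.range (k - d), ((Fᵀ) ^ i * P) *ᵥ (w (t + i) - what (t + i))
          + ∑ i ∈ Finset.Ico (k - d) (T - t), ((Fᵀ) ^ i * P) *ᵥ w (t + i))))) := by
  have hpast : P *ᵥ (A *ᵥ xhat t) = P *ᵥ (A *ᵥ x t)
      + ∑ i ∈ Icc 1 d, (P * A ^ i) *ᵥ (what (t - i) - w (t - i)) := by
    rw [← sub_eq_iff_eq_add', ← mulVec_sub, ← mulVec_sub,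
      estimate_sub_state_eq htd (fun s _ _ => hx s) hhat hinit, mulVec_sum, mulVec_sum,
      range_eq_Ico, ← Ico_add_one_right_eq_Icc, ← zero_add 1, ← sum_Ico_add']
    refine sum_congr rfl fun i _ => ?_
    rw [mulVec_mulVec, mulVec_mulVec, mul_assoc, ← pow_succ', zero_add, Nat.sub_sub, add_comm 1 i]
  have hfuture := sum_range_add_sum_Ico (fun i => ((Fᵀ) ^ i * P) *ᵥ w (t + i))
    (show k - d ≤ T - t by omega)
  rw [hu]
  congr 2
  rw [hpast, ← hfuture]
  simp only [mulVec_sub, sum_sub_distrib]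
  abel

theorem stmt6 (n m T d k t : ℕ) (hdk : d ≤ k) (htd : d ≤ t) (htT : t + k - d ≤ T)
    (A : Matrix (Fin n) (Fin n) ℝ) (B : Matrix (Fin n) (Fin m) ℝ)
    (Q : Matrix (Fin n) (Fin n) ℝ) (R : Matrix (Fin m) (Fin m) ℝ)
    (P : Matrix (Fin n) (Fin n) ℝ)
    (hQ : Q.PosSemidef) (hR : R.PosDef) (hP : P.PosDef)
    (hDARE : P = Q + Aᵀ * P * A - Aᵀ * P * B * (R + Bᵀ * P * B)⁻¹ * (Bᵀ * P * A))
    (F : Matrix (Fin n) (Fin n) ℝ)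
    (hF : F = A - B * ((R + Bᵀ * P * B)⁻¹ * (Bᵀ * P * A)))
    (x : ℕ → Fin n → ℝ) (u : ℕ → Fin m → ℝ) (w what : ℕ → Fin n → ℝ)
    (xhat : ℕ → Fin n → ℝ)
    (hx : ∀ s, x (s + 1) = A *ᵥ x s + B *ᵥ u s + w s)
    (hinit : xhat (t - d) = x (t - d))
    (hhat : ∀ s, t - d ≤ s → s < t → xhat (s + 1) = A *ᵥ xhat s + B *ᵥ u s + what s)
    (hu : u t = -((((R + Bᵀ * P * B)⁻¹ * Bᵀ) *ᵥ
        (P *ᵥ (A *ᵥ xhat t) + ∑ i ∈ Finset.range (k - d), ((Fᵀ) ^ i * P) *ᵥ what (t + i))))) :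
    u t = -((((R + Bᵀ * P * B)⁻¹ * Bᵀ) *ᵥ
      (P *ᵥ (A *ᵥ x t) + (∑ i ∈ Finset.range (T - t), ((Fᵀ) ^ i * P) *ᵥ w (t + i))
        - (∑ i ∈ Finset.Icc 1 d, (P * A ^ i) *ᵥ (w (t - i) - what (t - i))
          + ∑ i ∈ Finset.range (k - d), ((Fᵀ) ^ i * P) *ᵥ (w (t + i) - what (t + i))
          + ∑ i ∈ Finset.Ico (k - d) (T - t), ((Fᵀ) ^ i * P) *ᵥ w (t + i))))) :=
  stmt6_general n m T d k t htd htT A B R P F x u w what xhat hx hinit hhat hu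
end

section
/- Let H be an n×n real symmetric positive semidefinite matrix, let ρ ≥ 0, and let M be a T×T real matrix with nonnegative entries such that every row sum and every column sum of M is at most ρ. Let η_0,…,η_{T−1}, ψ_0,…,ψ_{T−1} ∈ ℝ^n satisfy ‖η_t‖ ≤ Σ_{s=0}^{T−1} M_{t,s} ‖ψ_s‖ for every t. Then Σ_{t=0}^{T−1} η_tᵀ H η_t ≤ ρ² ‖H‖ Σ_{t=0}^{T−1} ‖ψ_t‖². -/
open Matrix

/-! Bounding the quadratic form by the operator norm gives `η tᵀ H η t ≤ ‖H‖ ‖η t‖²`, so it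
remains to bound `∑ₜ (∑ₛ M t s ‖ψ s‖)²`. This is the Schur test: by weighted Cauchy–Schwarz each
square is at most `(∑ₛ M t s) (∑ₛ M t s ‖ψ s‖²) ≤ ρ ∑ₛ M t s ‖ψ s‖²`, and summing over `t` the
column bound contributes the second factor `ρ`. -/

open scoped Matrix.Norms.L2Operator

namespace Matrix

variable {ι κ : Type*} [Fintype κ]

theorem sq_mulVec_le_mul_sum_mul_sq (M : Matrix ι κ ℝ) (hM : ∀ i j, 0 ≤ M i j) (a : κ → ℝ)
    (i : ι) : (M *ᵥ a) i ^ 2 ≤ (∑ j, M i j) * ∑ j, M i j * a j ^ 2 :=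
  Finset.sum_sq_le_sum_mul_sum_of_sq_le_mul _ (fun j _ => hM i j)
    (fun j _ => mul_nonneg (hM i j) (sq_nonneg _)) fun j _ => le_of_eq (by ring)

theorem sum_sq_mulVec_le_of_sum_row_le_of_sum_col_le [Fintype ι] (M : Matrix ι κ ℝ)
    (hM : ∀ i j, 0 ≤ M i j) {r c : ℝ} (hr : 0 ≤ r) (hrow : ∀ i, ∑ j, M i j ≤ r)
    (hcol : ∀ j, ∑ i, M i j ≤ c) (a : κ → ℝ) : ∑ i, (M *ᵥ a) i ^ 2 ≤ r * c * ∑ j, a j ^ 2 :=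
  calc ∑ i, (M *ᵥ a) i ^ 2 ≤ ∑ i, r * ∑ j, M i j * a j ^ 2 := by
        gcongr with i
        refine (sq_mulVec_le_mul_sum_mul_sq M hM a i).trans ?_
        gcongr
        · exact Finset.sum_nonneg fun j _ => mul_nonneg (hM i j) (sq_nonneg _)
        · exact hrow i
    _ = r * ∑ j, (∑ i, M i j) * a j ^ 2 := by
        rw [← Finset.mul_sum, Finset.sum_comm]
        simp only [Finset.sum_mul]
    _ ≤ r * ∑ j, c * a j ^ 2 := by
        gcongr with j
        exact hcol j
    _ = r * c * ∑ j, a j ^ 2 := by rw [← Finset.mul_sum, mul_assoc]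

end Matrix

theorem evNorm_eq_norm_toLp {n : ℕ} (x : Fin n → ℝ) :
    evNorm x = ‖(WithLp.toLp 2 x : EuclideanSpace ℝ (Fin n))‖ := by
  simp [evNorm, EuclideanSpace.norm_eq]

theorem evNorm_mulVec_le {n m : ℕ} (A : Matrix (Fin n) (Fin m) ℝ) (x : Fin m → ℝ) :
    evNorm (A *ᵥ x) ≤ ‖A‖ * evNorm x := by
  rw [evNorm_eq_norm_toLp, evNorm_eq_norm_toLp]
  exact A.l2_opNorm_mulVec (WithLp.toLp 2 x)

theorem specNorm_eq_l2_opNorm {n m : ℕ} (A : Matrix (Fin n) (Fin m) ℝ) : specNorm A = ‖A‖ := by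
  have hle : ∀ c ∈ {c : ℝ | ∃ x : Fin m → ℝ, evNorm x ≤ 1 ∧ c = evNorm (A *ᵥ x)}, c ≤ ‖A‖ := by
    rintro c ⟨x, hx, rfl⟩
    calc evNorm (A *ᵥ x) ≤ ‖A‖ * evNorm x := evNorm_mulVec_le A x
      _ ≤ ‖A‖ * 1 := by gcongr
      _ = ‖A‖ := mul_one _
  have hzero : (0 : ℝ) ∈ {c : ℝ | ∃ x : Fin m → ℝ, evNorm x ≤ 1 ∧ c = evNorm (A *ᵥ x)} :=
    ⟨0, by simp [evNorm], by simp [evNorm]⟩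
  refine le_antisymm (csSup_le ⟨0, hzero⟩ hle) ?_
  rw [Matrix.l2_opNorm_def]
  refine ContinuousLinearMap.opNorm_le_of_unit_norm (le_csSup ⟨_, hle⟩ hzero) fun x hx => ?_
  refine le_csSup ⟨_, hle⟩ ⟨WithLp.ofLp x, ?_, ?_⟩
  · simp [evNorm_eq_norm_toLp, hx]
  · rw [evNorm_eq_norm_toLp]
    rfl

theorem dotProduct_mulVec_self_le {n : ℕ} (A : Matrix (Fin n) (Fin n) ℝ) (x : Fin n → ℝ) :
    x ⬝ᵥ (A *ᵥ x) ≤ ‖A‖ * evNorm x ^ 2 :=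
  calc x ⬝ᵥ (A *ᵥ x) ≤ evNorm x * evNorm (A *ᵥ x) := Real.sum_mul_le_sqrt_mul_sqrt _ _ _
    _ ≤ evNorm x * (‖A‖ * evNorm x) := by
        gcongr
        · exact Real.sqrt_nonneg _
        · exact evNorm_mulVec_le A x
    _ = ‖A‖ * evNorm x ^ 2 := by ring

theorem stmt8_general (n T : ℕ) (H : Matrix (Fin n) (Fin n) ℝ)
    (ρ : ℝ) (hρ : 0 ≤ ρ)
    (M : Matrix (Fin T) (Fin T) ℝ) (hM : ∀ t s, 0 ≤ M t s)
    (hrow : ∀ t, ∑ s, M t s ≤ ρ) (hcol : ∀ s, ∑ t, M t s ≤ ρ)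
    (η ψ : Fin T → Fin n → ℝ)
    (hηψ : ∀ t, evNorm (η t) ≤ ∑ s, M t s * evNorm (ψ s)) :
    ∑ t, η t ⬝ᵥ (H *ᵥ η t) ≤ ρ ^ 2 * specNorm H * ∑ t, evNorm (ψ t) ^ 2 := by
  set a : Fin T → ℝ := fun s => evNorm (ψ s)
  have hη : ∀ t, evNorm (η t) ^ 2 ≤ (M *ᵥ a) t ^ 2 := fun t =>
    pow_le_pow_left₀ (Real.sqrt_nonneg _) (hηψ t) 2
  rw [specNorm_eq_l2_opNorm]
  calc ∑ t, η t ⬝ᵥ (H *ᵥ η t) ≤ ∑ t, ‖H‖ * (M *ᵥ a) t ^ 2 := by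
        gcongr with t
        exact (dotProduct_mulVec_self_le H (η t)).trans
          (mul_le_mul_of_nonneg_left (hη t) (norm_nonneg H))
    _ ≤ ‖H‖ * (ρ * ρ * ∑ t, a t ^ 2) := by
        rw [← Finset.mul_sum]
        gcongr
        exact M.sum_sq_mulVec_le_of_sum_row_le_of_sum_col_le hM hρ hrow hcol a
    _ = ρ ^ 2 * ‖H‖ * ∑ t, evNorm (ψ t) ^ 2 := by ring

theorem stmt8 (n T : ℕ) (H : Matrix (Fin n) (Fin n) ℝ) (hH : H.PosSemidef)
    (ρ : ℝ) (hρ : 0 ≤ ρ)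
    (M : Matrix (Fin T) (Fin T) ℝ) (hM : ∀ t s, 0 ≤ M t s)
    (hrow : ∀ t, ∑ s, M t s ≤ ρ) (hcol : ∀ s, ∑ t, M t s ≤ ρ)
    (η ψ : Fin T → Fin n → ℝ)
    (hηψ : ∀ t, evNorm (η t) ≤ ∑ s, M t s * evNorm (ψ s)) :
    ∑ t, η t ⬝ᵥ (H *ᵥ η t) ≤ ρ ^ 2 * specNorm H * ∑ t, evNorm (ψ t) ^ 2 :=
  stmt8_general n T H ρ hρ M hM hrow hcol η ψ hηψ
end

section
/- Let 0 < f < 1 and let (ε_i)_{i≥0} be a nondecreasing sequence of nonnegative reals. Define g : ℕ → ℝ by g(k) = (1 + f) Σ_{i=0}^{k−1} ε_i f^i + f^k. Then for every k ∈ ℕ, g(k+1) < g(k) if and only if ε_k < (1 − f)/(1 + f). Consequently, if k ≥ 1 satisfies ε_{k−1} < (1 − f)/(1 + f) < ε_k, then g attains its minimum over ℕ uniquely at k. -/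
/-! Using the `k`-th prediction changes `g` by `f ^ k * ((1 + f) * ε k - (1 - f))`, whose sign
is that of `ε k - (1 - f) / (1 + f)`. As `ε` is monotone, `g` therefore strictly decreases up to
the first `k` with `ε k > (1 - f) / (1 + f)` and strictly increases from there on. -/

open Matrix

theorem Nat.apply_lt_apply_of_ne_of_strict_valley {α : Type*} [Preorder α] {g : ℕ → α} {k : ℕ}
    (hdec : ∀ i < k, g (i + 1) < g i) (hinc : ∀ i, k ≤ i → g i < g (i + 1))
    {j : ℕ} (hj : j ≠ k) : g k < g j := by
  rcases hj.lt_or_gt with hjk | hkj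
  · exact strictAntiOn_Iic_of_succ_lt (ψ := g) (by simpa only [Order.succ_eq_add_one] using hdec)
      (Set.mem_Iic.2 hjk.le) Set.self_mem_Iic hjk
  · exact Nat.rel_of_forall_rel_succ_of_le_of_lt (· < ·) hinc le_rfl hkj

section PredictionFactor

variable {𝕜 : Type*}

def predictionFactor [CommRing 𝕜] (f : 𝕜) (ε : ℕ → 𝕜) (k : ℕ) : 𝕜 :=
  (1 + f) * ∑ i ∈ Finset.range k, ε i * f ^ i + f ^ k

theorem predictionFactor_succ_sub [CommRing 𝕜] (f : 𝕜) (ε : ℕ → 𝕜) (k : ℕ) :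
    predictionFactor f ε (k + 1) - predictionFactor f ε k = f ^ k * ((1 + f) * ε k - (1 - f)) := by
  simp only [predictionFactor, Finset.sum_range_succ]
  ring

variable [Field 𝕜] [LinearOrder 𝕜] [IsStrictOrderedRing 𝕜] {f : 𝕜}

theorem predictionFactor_succ_lt_iff (hf : 0 < f) (ε : ℕ → 𝕜) (k : ℕ) :
    predictionFactor f ε (k + 1) < predictionFactor f ε k ↔ ε k < (1 - f) / (1 + f) := by
  rw [← sub_neg, predictionFactor_succ_sub, ← mul_zero (f ^ k),
    mul_lt_mul_iff_right₀ (pow_pos hf k), sub_neg, lt_div_iff₀' (by linarith)]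

theorem predictionFactor_lt_succ_iff (hf : 0 < f) (ε : ℕ → 𝕜) (k : ℕ) :
    predictionFactor f ε k < predictionFactor f ε (k + 1) ↔ (1 - f) / (1 + f) < ε k := by
  rw [← sub_pos, predictionFactor_succ_sub, mul_pos_iff_of_pos_left (pow_pos hf k), sub_pos,
    div_lt_iff₀' (by linarith)]

end PredictionFactor

theorem stmt18_general (f : ℝ) (hf0 : 0 < f)
    (ε : ℕ → ℝ) (hmono : Monotone ε) :
    (∀ k : ℕ,
      ((1 + f) * ∑ i ∈ Finset.range (k + 1), ε i * f ^ i + f ^ (k + 1) <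
          (1 + f) * ∑ i ∈ Finset.range k, ε i * f ^ i + f ^ k) ↔
        ε k < (1 - f) / (1 + f)) ∧
    ∀ k : ℕ, 1 ≤ k → ε (k - 1) < (1 - f) / (1 + f) → (1 - f) / (1 + f) < ε k →
      ∀ j : ℕ, j ≠ k →
        (1 + f) * ∑ i ∈ Finset.range k, ε i * f ^ i + f ^ k <
          (1 + f) * ∑ i ∈ Finset.range j, ε i * f ^ i + f ^ j := by
  refine ⟨predictionFactor_succ_lt_iff hf0 ε, fun k _ hbefore hafter j hj ↦ ?_⟩
  refine Nat.apply_lt_apply_of_ne_of_strict_valley (g := predictionFactor f ε)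
    (fun i hi ↦ ?_) (fun i hi ↦ ?_) hj
  · exact (predictionFactor_succ_lt_iff hf0 ε i).2 ((hmono (by omega)).trans_lt hbefore)
  · exact (predictionFactor_lt_succ_iff hf0 ε i).2 (hafter.trans_le (hmono hi))

theorem stmt18 (f : ℝ) (hf0 : 0 < f) (hf1 : f < 1)
    (ε : ℕ → ℝ) (hε0 : ∀ i, 0 ≤ ε i) (hmono : Monotone ε) :
    (∀ k : ℕ,
      ((1 + f) * ∑ i ∈ Finset.range (k + 1), ε i * f ^ i + f ^ (k + 1) <
          (1 + f) * ∑ i ∈ Finset.range k, ε i * f ^ i + f ^ k) ↔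
        ε k < (1 - f) / (1 + f)) ∧
    ∀ k : ℕ, 1 ≤ k → ε (k - 1) < (1 - f) / (1 + f) → (1 - f) / (1 + f) < ε k →
      ∀ j : ℕ, j ≠ k →
        (1 + f) * ∑ i ∈ Finset.range k, ε i * f ^ i + f ^ k <
          (1 + f) * ∑ i ∈ Finset.range j, ε i * f ^ i + f ^ j :=
  stmt18_general f hf0 ε hmono
end
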